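/- Let $N$ be a Nijenhuis operator on a left-symmetric conformal algebra $A$. Then the bilinear map $\omega_\lambda(a,b) = N(a)_\lambda b + a_\lambda N(b) - N(a_\lambda b)$ generates a linear deformation of $A$ (i.e., $a_\lambda b + t\omega_\lambda(a,b)$ is a left-symmetric conformal product), and this deformation is trivial: $T_t = \mathrm{id} + tN$ is a left-symmetric conformal algebra homomorphism from $(A, \cdot^\omega)$ to $A$. -/

import Mathlib

/- Encoding conventions.
A `ℂ[∂]`-module is encoded as a complex vector space `A` together with an
endomorphism `D : Module.End ℂ A` (the action of `∂`).
A polynomial `Σ cₙ λⁿ ∈ A[λ]` is encoded by its coefficient family `ℕ →₀ A`,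
and `ev l p` is its evaluation at `λ = l`.  Since `ℂ` is infinite, a polynomial
identity in the formal variables `λ, μ, …` is equivalent to the corresponding
family of identities for all complex values of the variables, which is how all
axioms are stated below.
A `λ`-product `a ⊗ b ↦ a_λ b ∈ A[λ]` is encoded as `mul : A → A → (ℕ →₀ A)`
(the coefficients of `a_λ b`), its evaluation at `λ = l` being `ev l (mul a b)`.
`substNeg D p` is the result of substituting the variable of `p` by `-∂-λ`:
it is again a polynomial in `λ` with coefficients `ℕ →₀ A`, so that
`b_{-∂-λ} a` is encoded as `substNeg D (mul b a)` (as a polynomial in `λ`). -/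

namespace LSCpaper

open Finsupp

variable {A M V : Type*} [AddCommGroup A] [Module ℂ A] [AddCommGroup M] [Module ℂ M]
  [AddCommGroup V] [Module ℂ V]

/-- Evaluation of a polynomial with coefficients in `V` at a complex number. -/
noncomputable def ev (l : ℂ) (p : ℕ →₀ V) : V := p.sum fun n c => l ^ n • c

/-- Substitution of `-∂ - λ` for the variable of `p`; the result is the
coefficient family (in `λ`) of the resulting polynomial. -/
noncomputable def substNeg (D : Module.End ℂ A) (p : ℕ →₀ A) : ℕ →₀ A :=
  p.sum fun i c => ∑ k ∈ Finset.range (i + 1),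
    Finsupp.single k ((((-1 : ℂ) ^ k * (i.choose k : ℂ))) • ((-D) ^ (i - k)) c)

/-- `ℂ`-bilinearity of a `λ`-product. -/
def Bilin (f : A → M → ℕ →₀ V) : Prop :=
  (∀ a a' b, f (a + a') b = f a b + f a' b) ∧
  (∀ (r : ℂ) (a : A) (b : M), f (r • a) b = r • f a b) ∧
  (∀ a b b', f a (b + b') = f a b + f a b') ∧
  (∀ (r : ℂ) (a : A) (b : M), f a (r • b) = r • f a b)

/-- `A` with `∂`-action `D` and `λ`-product `mul` is a left-symmetric conformal
algebra. -/
structure IsLSC (D : Module.End ℂ A) (mul : A → A → ℕ →₀ A) : Prop where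
  bilin : Bilin mul
  sesq1 : ∀ (l : ℂ) (a b : A), ev l (mul (D a) b) = (-l) • ev l (mul a b)
  sesq2 : ∀ (l : ℂ) (a b : A), ev l (mul a (D b)) = D (ev l (mul a b)) + l • ev l (mul a b)
  lsym : ∀ (l m : ℂ) (a b c : A),
    ev (l + m) (mul (ev l (mul a b)) c) - ev l (mul a (ev m (mul b c))) =
      ev (l + m) (mul (ev m (mul b a)) c) - ev m (mul b (ev l (mul a c)))

/-- `A` with `∂`-action `D` and `λ`-bracket `br` is a Lie conformal algebra. -/
structure IsLieConf (D : Module.End ℂ A) (br : A → A → ℕ →₀ A) : Prop where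
  bilin : Bilin br
  sesq1 : ∀ (l : ℂ) (a b : A), ev l (br (D a) b) = (-l) • ev l (br a b)
  sesq2 : ∀ (l : ℂ) (a b : A), ev l (br a (D b)) = D (ev l (br a b)) + l • ev l (br a b)
  skew : ∀ (l : ℂ) (a b : A), ev l (br a b) = - ev l (substNeg D (br b a))
  jacobi : ∀ (l m : ℂ) (a b c : A),
    ev l (br a (ev m (br b c))) =
      ev (l + m) (br (ev l (br a b)) c) + ev m (br b (ev l (br a c)))

/-- The evaluated bracket `[a_λ b] = a_λ b - b_{-∂-λ} a` of the sub-adjacent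
Lie conformal algebra. -/
noncomputable def brEv (D : Module.End ℂ A) (mul : A → A → ℕ →₀ A) (l : ℂ) (a b : A) : A :=
  ev l (mul a b) - ev l (substNeg D (mul b a))

end LSCpaper

namespace LSCpaper

variable {A : Type*} [AddCommGroup A] [Module ℂ A]

/-- The deformed product `a ·^N_λ b = N(a)_λ b + a_λ N(b) - N(a_λ b)`
associated with a `ℂ[∂]`-module endomorphism `N`. -/
noncomputable def mulN (D : Module.End ℂ A) (N : A →ₗ[ℂ] A)
    (mul : A → A → ℕ →₀ A) (a b : A) : ℕ →₀ A :=
  mul (N a) b + mul a (N b) - Finsupp.mapRange (⇑N) (map_zero N) (mul a b)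

/-- `N` is a Nijenhuis operator on the left-symmetric conformal algebra
`(A, D, mul)`: `N(a)_λ N(b) = N(a ·^N_λ b)`. -/
def IsNijenhuis (D : Module.End ℂ A) (N : A →ₗ[ℂ] A) (mul : A → A → ℕ →₀ A) : Prop :=
  ∀ (l : ℂ) (a b : A), ev l (mul (N a) (N b)) = N (ev l (mulN D N mul a b))

end LSCpaper

/-! `T_t = id + t N` maps the deformed product to the original one: in the expansion of
`T_t(a)_λ T_t(b)`, the `t²`-term `N(a)_λ N(b)` is exactly `N(ω_λ(a,b))` by the Nijenhuis
identity. Consequently `T_t` sends the left-symmetry defect of the deformed product to the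
defect of `T_t a, T_t b, T_t c` in `A`, which vanishes. The deformed defect is `t q₁ + t² q₂`
(its constant term is the defect of `A`), so `t q₁ + t² (q₂ + N q₁) + t³ N q₂ = 0` for all `t`,
forcing `q₁ = q₂ = 0`: the deformed product is left-symmetric even where `T_t` is not
injective. -/

namespace LSCpaper

section Evaluation

variable {V : Type*} [AddCommGroup V] [Module ℂ V]

lemma ev_add (l : ℂ) (p q : ℕ →₀ V) : ev l (p + q) = ev l p + ev l q :=
  Finsupp.sum_add_index' (fun _ => smul_zero _) (fun _ _ _ => smul_add _ _ _)

lemma ev_smul (l r : ℂ) (p : ℕ →₀ V) : ev l (r • p) = r • ev l p := by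
  rw [ev, Finsupp.sum_smul_index' (fun _ => smul_zero _), ev, Finsupp.smul_sum]
  exact Finsupp.sum_congr fun _ _ => smul_comm _ _ _

lemma ev_sub (l : ℂ) (p q : ℕ →₀ V) : ev l (p - q) = ev l p - ev l q := by
  rw [sub_eq_add_neg, ev_add, ← neg_one_smul ℂ q, ev_smul, neg_one_smul, ← sub_eq_add_neg]

lemma ev_mapRange (l : ℂ) (N : V →ₗ[ℂ] V) (p : ℕ →₀ V) :
    ev l (Finsupp.mapRange N (map_zero N) p) = N (ev l p) := by
  rw [ev, Finsupp.sum_mapRange_index (fun _ => smul_zero _), ev, map_finsuppSum]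
  exact Finsupp.sum_congr fun _ _ => (map_smul N _ _).symm

lemma eq_zero_of_forall_smul_add_sq_smul_add_cube_smul {u v w : V}
    (h : ∀ s : ℂ, s • u + s ^ 2 • v + s ^ 3 • w = 0) : u = 0 ∧ v = 0 ∧ w = 0 := by
  have e₁ := h 1
  have e₂ := h (-1)
  have e₃ := h 2
  refine ⟨?_, ?_, ?_⟩
  · linear_combination (norm := module) e₁ - (1 / 3 : ℂ) • e₂ - (1 / 6 : ℂ) • e₃
  · linear_combination (norm := module) (1 / 2 : ℂ) • (e₁ + e₂)
  · linear_combination (norm := module) (1 / 6 : ℂ) • e₃ - (1 / 2 : ℂ) • e₁ - (1 / 6 : ℂ) • e₂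

lemma eq_zero_of_forall_smul_add_sq_smul_add_smul_map_eq_zero (N : V →ₗ[ℂ] V) {q₁ q₂ : V}
    (h : ∀ s : ℂ, (s • q₁ + s ^ 2 • q₂) + s • N (s • q₁ + s ^ 2 • q₂) = 0) :
    q₁ = 0 ∧ q₂ = 0 := by
  obtain ⟨hq₁, hq₂, -⟩ : q₁ = 0 ∧ q₂ + N q₁ = 0 ∧ N q₂ = 0 := by
    refine eq_zero_of_forall_smul_add_sq_smul_add_cube_smul fun s => ?_
    rw [← h s, map_add, map_smul, map_smul]
    module
  rw [hq₁, map_zero, add_zero] at hq₂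
  exact ⟨hq₁, hq₂⟩

end Evaluation

section Bilinear

variable {A M V : Type*} [AddCommGroup A] [Module ℂ A] [AddCommGroup M] [Module ℂ M]
  [AddCommGroup V] [Module ℂ V] {f g : A → M → ℕ →₀ V}

lemma Bilin.add_smul (hf : Bilin f) (hg : Bilin g) (t : ℂ) :
    Bilin fun a b => f a b + t • g a b := by
  obtain ⟨hf₁, hf₂, hf₃, hf₄⟩ := hf
  obtain ⟨hg₁, hg₂, hg₃, hg₄⟩ := hg
  refine ⟨fun a a' b => ?_, fun r a b => ?_, fun a b b' => ?_, fun r a b => ?_⟩ <;>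
    simp only [hf₁, hf₂, hf₃, hf₄, hg₁, hg₂, hg₃, hg₄] <;> module

lemma Bilin.ev_add_smul_left (hf : Bilin f) (l s : ℂ) (a a' : A) (b : M) :
    ev l (f (a + s • a') b) = ev l (f a b) + s • ev l (f a' b) := by
  rw [hf.1, hf.2.1, ev_add, ev_smul]

lemma Bilin.ev_add_smul_right (hf : Bilin f) (l s : ℂ) (a : A) (b b' : M) :
    ev l (f a (b + s • b')) = ev l (f a b) + s • ev l (f a b') := by
  rw [hf.2.2.1, hf.2.2.2, ev_add, ev_smul]

end Bilinear

section Deformation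

variable {A : Type*} [AddCommGroup A] [Module ℂ A] {D : Module.End ℂ A} {N : A →ₗ[ℂ] A}
  {mul f g : A → A → ℕ →₀ A}

lemma ev_mulN (l : ℂ) (a b : A) :
    ev l (mulN D N f a b) = ev l (f (N a) b) + ev l (f a (N b)) - N (ev l (f a b)) := by
  rw [mulN, ev_sub, ev_add, ev_mapRange]

lemma Bilin.mulN (hf : Bilin f) : Bilin (mulN D N f) := by
  obtain ⟨hf₁, hf₂, hf₃, hf₄⟩ := hf
  have hN₁ (p q : ℕ →₀ A) : Finsupp.mapRange N (map_zero N) (p + q) =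
      Finsupp.mapRange N (map_zero N) p + Finsupp.mapRange N (map_zero N) q :=
    Finsupp.mapRange_add (map_add N) p q
  have hN₂ (r : ℂ) (p : ℕ →₀ A) : Finsupp.mapRange N (map_zero N) (r • p) =
      r • Finsupp.mapRange N (map_zero N) p :=
    Finsupp.mapRange_smul r p (map_smul N r)
  refine ⟨fun a a' b => ?_, fun r a b => ?_, fun a b b' => ?_, fun r a b => ?_⟩ <;>
    simp only [LSCpaper.mulN, map_add, map_smul, hf₁, hf₂, hf₃, hf₄, hN₁, hN₂] <;> module

structure IsConformalProduct (D : Module.End ℂ A) (f : A → A → ℕ →₀ A) : Prop where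
  bilin : Bilin f
  sesq1 : ∀ (l : ℂ) (a b : A), ev l (f (D a) b) = (-l) • ev l (f a b)
  sesq2 : ∀ (l : ℂ) (a b : A), ev l (f a (D b)) = D (ev l (f a b)) + l • ev l (f a b)

lemma IsLSC.isConformalProduct (h : IsLSC D mul) : IsConformalProduct D mul :=
  ⟨h.bilin, h.sesq1, h.sesq2⟩

lemma IsConformalProduct.add_smul (hf : IsConformalProduct D f) (hg : IsConformalProduct D g)
    (t : ℂ) : IsConformalProduct D fun a b => f a b + t • g a b where
  bilin := hf.bilin.add_smul hg.bilin t
  sesq1 l a b := by simp only [ev_add, ev_smul, hf.sesq1, hg.sesq1]; module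
  sesq2 l a b := by simp only [ev_add, ev_smul, hf.sesq2, hg.sesq2, map_add, map_smul]; module

lemma IsConformalProduct.mulN (hf : IsConformalProduct D f) (hND : ∀ a, N (D a) = D (N a)) :
    IsConformalProduct D (mulN D N f) where
  bilin := hf.bilin.mulN
  sesq1 l a b := by simp only [ev_mulN, hND, hf.sesq1, map_smul]; module
  sesq2 l a b := by simp only [ev_mulN, hND, hf.sesq2, map_add, map_sub, map_smul]; module

theorem IsNijenhuis.ev_add_smul_map (hmul : Bilin mul) (hN : IsNijenhuis D N mul)
    (t l : ℂ) (a b : A) :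
    ev l (mul a b + t • mulN D N mul a b) + t • N (ev l (mul a b + t • mulN D N mul a b)) =
      ev l (mul (a + t • N a) (b + t • N b)) := by
  rw [hmul.ev_add_smul_left, hmul.ev_add_smul_right, hmul.ev_add_smul_right, hN l a b]
  simp only [ev_add, ev_smul, ev_mulN, map_add, map_sub, map_smul]
  module

noncomputable def lsymDefect (f g : A → A → ℕ →₀ A) (l m : ℂ) (a b c : A) : A :=
  (ev (l + m) (f (ev l (g a b)) c) - ev l (f a (ev m (g b c)))) -
    (ev (l + m) (f (ev m (g b a)) c) - ev m (f b (ev l (g a c))))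

lemma IsLSC.lsymDefect_eq_zero (h : IsLSC D mul) (l m : ℂ) (a b c : A) :
    lsymDefect mul mul l m a b c = 0 :=
  sub_eq_zero.mpr (h.lsym l m a b c)

lemma lsymDefect_map {B : Type*} [AddCommGroup B] [Module ℂ B] {g : B → B → ℕ →₀ B}
    (T : A →ₗ[ℂ] B) (hT : ∀ l a b, T (ev l (f a b)) = ev l (g (T a) (T b)))
    (l m : ℂ) (a b c : A) :
    T (lsymDefect f f l m a b c) = lsymDefect g g l m (T a) (T b) (T c) := by
  simp only [lsymDefect, map_sub, hT]

lemma lsymDefect_add_smul (hf : Bilin f) (hg : Bilin g) (t l m : ℂ) (a b c : A) :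
    lsymDefect (fun a b => f a b + t • g a b) (fun a b => f a b + t • g a b) l m a b c =
      lsymDefect f f l m a b c
        + t • (lsymDefect f g l m a b c + lsymDefect g f l m a b c)
        + t ^ 2 • lsymDefect g g l m a b c := by
  simp only [lsymDefect, ev_add, ev_smul, hf.ev_add_smul_left, hf.ev_add_smul_right,
    hg.ev_add_smul_left, hg.ev_add_smul_right]
  module

theorem IsNijenhuis.lsymDefect_eq_zero (hA : IsLSC D mul) (hN : IsNijenhuis D N mul)
    (t l m : ℂ) (a b c : A) :
    lsymDefect (fun a b => mul a b + t • mulN D N mul a b)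
      (fun a b => mul a b + t • mulN D N mul a b) l m a b c = 0 := by
  have hω : Bilin (mulN D N mul) := hA.bilin.mulN
  obtain ⟨h₁, h₂⟩ : lsymDefect mul (mulN D N mul) l m a b c
      + lsymDefect (mulN D N mul) mul l m a b c = 0 ∧
      lsymDefect (mulN D N mul) (mulN D N mul) l m a b c = 0 := by
    refine eq_zero_of_forall_smul_add_sq_smul_add_smul_map_eq_zero N fun s => ?_
    have hT := lsymDefect_map (LinearMap.id + s • N)
      (fun l a b => by simpa using hN.ev_add_smul_map hA.bilin s l a b) l m a b c
    simpa [lsymDefect_add_smul hA.bilin hω, hA.lsymDefect_eq_zero] using hT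
  rw [lsymDefect_add_smul hA.bilin hω, hA.lsymDefect_eq_zero, h₁, h₂]
  simp

end Deformation

/-- Let `N` be a Nijenhuis operator on a left-symmetric
conformal algebra `A`.  Then `ω_λ(a,b) = N(a)_λ b + a_λ N(b) - N(a_λ b)`
generates a linear deformation of `A` (i.e. `a_λ b + t ω_λ(a,b)` is a
left-symmetric conformal product for every value of `t`), and the deformation
is trivial: `T_t = id + t N` is a left-symmetric conformal algebra
homomorphism from the deformed algebra `(A, ·^ω)` to `A`. -/
theorem nijenhuis_trivial_deformation {A : Type*} [AddCommGroup A] [Module ℂ A]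
    (D : Module.End ℂ A) (N : A →ₗ[ℂ] A) (mul : A → A → ℕ →₀ A)
    (hA : IsLSC D mul) (hND : ∀ a, N (D a) = D (N a))
    (hN : IsNijenhuis D N mul) :
    (∀ t : ℂ, IsLSC D (fun a b => mul a b + t • mulN D N mul a b)) ∧
      (∀ (t l : ℂ) (a b : A),
        ev l (mul a b + t • mulN D N mul a b)
            + t • N (ev l (mul a b + t • mulN D N mul a b)) =
          ev l (mul (a + t • N a) (b + t • N b))) := by
  refine ⟨fun t => ?_, hN.ev_add_smul_map hA.bilin⟩
  have hconf := hA.isConformalProduct.add_smul (hA.isConformalProduct.mulN hND) t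
  exact ⟨hconf.bilin, hconf.sesq1, hconf.sesq2,
    fun l m a b c => sub_eq_zero.mp (hN.lsymDefect_eq_zero hA t l m a b c)⟩

end LSCpaper
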